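/- Let K = ∫₀¹ (1/x²)(1/√(1-x⁴) - 1) dx and a_l = arcosh(1/(1-K)). Then for all a ≥ a_l, ∫₀^∞ sinh(a+t)·(sinh(2a+2t)/√(sinh²(2a+2t) - sinh²(2a)) - 1) dt < cosh(a) - 1. -/

import Mathlib

/-!
The substitution `x = cosh b / cosh (b + t)` turns `cosh b * Kc` into
`∫ t > 0, sinh (b + t) * (u ^ 2 / √(u ^ 4 - c ^ 4) - 1)` with `u = cosh (b + t)`, `c = cosh b`.
This integrand, the one of the theorem, and the derivative `sinh (b + t) * (u / √(u ^ 2 - c ^ 2) - 1)`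
of `√(u ^ 2 - c ^ 2) - u` all have the shape `sinh (b + t) * (x / √(x ^ 2 - y ^ 2) - 1)`, and
`x / √(x ^ 2 - y ^ 2) = 1 / √(1 - (y / x) ^ 2)` increases with `y / x`.
As `tanh` is increasing, `sinh (2 a) / sinh (2 (a + t)) < cosh a ^ 2 / cosh (a + t) ^ 2`, so the
integral of the theorem is below `cosh a * Kc`, and `cosh a * Kc ≤ cosh a - 1` is the choice of `a`. As `c ^ 2 / u ^ 2 < c / u`, `cosh b * Kc` is below the
integral of that derivative, which is `cosh b`; at `b = 0` this is `Kc < 1`.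
-/

open Real MeasureTheory

noncomputable def Kc : ℝ :=
  ∫ x in Set.Ioo (0:ℝ) 1, (1/x^2) * (1 / Real.sqrt (1 - x^4) - 1)

noncomputable def arcosh (x : ℝ) : ℝ := Real.log (x + Real.sqrt (x^2 - 1))

open Set Filter Topology

section SetIntegral

variable {α : Type*} [MeasurableSpace α] {μ : Measure α} {s : Set α} {f g : α → ℝ}

theorem setIntegral_lt_setIntegral_of_forall_lt (hs : MeasurableSet s) (hμs : μ s ≠ 0)
    (hf : IntegrableOn f s μ) (hg : IntegrableOn g s μ) (hfg : ∀ x ∈ s, f x < g x) :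
    ∫ x in s, f x ∂μ < ∫ x in s, g x ∂μ := by
  have hnonneg : 0 ≤ᵐ[μ.restrict s] fun x => g x - f x :=
    (ae_restrict_iff' hs).2 (ae_of_all _ fun x hx => sub_nonneg.2 (hfg x hx).le)
  have hsupp : s ⊆ Function.support fun x => g x - f x :=
    fun x hx => sub_ne_zero.2 (hfg x hx).ne'
  have hpos := (setIntegral_pos_iff_support_of_nonneg_ae hnonneg (hg.sub hf)).2
    (by rwa [inter_eq_self_of_subset_right hsupp, pos_iff_ne_zero])
  rw [integral_sub hg hf] at hpos
  linarith

theorem integrableOn_of_nonneg_of_le (hs : MeasurableSet s)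
    (hf : AEStronglyMeasurable f (μ.restrict s)) (hg : IntegrableOn g s μ)
    (hf0 : ∀ x ∈ s, 0 ≤ f x) (hfg : ∀ x ∈ s, f x ≤ g x) : IntegrableOn f s μ :=
  integrable_of_le_of_le hf ((ae_restrict_iff' hs).2 (ae_of_all _ hf0))
    ((ae_restrict_iff' hs).2 (ae_of_all _ hfg)) (integrable_zero _ _ _) hg

end SetIntegral

theorem div_sqrt_sq_sub_sq_eq {x : ℝ} (hx : 0 < x) (y : ℝ) :
    x / √(x ^ 2 - y ^ 2) = 1 / √(1 - (y / x) ^ 2) := by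
  rw [show x ^ 2 - y ^ 2 = x ^ 2 * (1 - (y / x) ^ 2) by field_simp, sqrt_mul (sq_nonneg x),
    sqrt_sq hx.le, div_mul_cancel_left₀ hx.ne', one_div]

theorem one_le_div_sqrt_sq_sub_sq {x y : ℝ} (hy : 0 ≤ y) (hyx : y < x) :
    1 ≤ x / √(x ^ 2 - y ^ 2) := by
  have hx : 0 < x := hy.trans_lt hyx
  rw [one_le_div (sqrt_pos.2 (by nlinarith))]
  calc √(x ^ 2 - y ^ 2) ≤ √(x ^ 2) := sqrt_le_sqrt (by nlinarith)
    _ = x := sqrt_sq hx.le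

theorem div_sqrt_sq_sub_sq_lt {x y x' y' : ℝ} (hx : 0 < x) (hy : 0 ≤ y) (hx' : 0 < x')
    (hyx' : y' < x') (h : y / x < y' / x') : x / √(x ^ 2 - y ^ 2) < x' / √(x' ^ 2 - y' ^ 2) := by
  rw [div_sqrt_sq_sub_sq_eq hx, div_sqrt_sq_sub_sq_eq hx']
  have hr : 0 ≤ y / x := div_nonneg hy hx.le
  have hr' : y' / x' < 1 := (div_lt_one hx').2 hyx'
  have hpos : 0 < 1 - (y' / x') ^ 2 := by nlinarith
  exact one_div_lt_one_div_of_lt (sqrt_pos.2 hpos) (sqrt_lt_sqrt hpos.le (by nlinarith))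

theorem cosh_lt_cosh_add {b t : ℝ} (hb : 0 ≤ b) (ht : 0 < t) : cosh b < cosh (b + t) :=
  cosh_strictMonoOn (mem_Ici.2 hb) (mem_Ici.2 (by linarith)) (by linarith)

theorem sinh_two_mul_div_lt {a u : ℝ} (ha : 0 ≤ a) (hau : a < u) :
    sinh (2 * a) / sinh (2 * u) < cosh a ^ 2 / cosh u ^ 2 := by
  have hu : 0 < sinh u := sinh_pos_iff.2 (ha.trans_lt hau)
  have hsub : sinh a * cosh u - cosh a * sinh u < 0 := by
    rw [← sinh_sub]; exact sinh_neg_iff.2 (by linarith)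
  have hcc := mul_pos (cosh_pos a) (cosh_pos u)
  rw [div_lt_div_iff₀ (by rw [sinh_two_mul]; positivity) (by positivity), sinh_two_mul, sinh_two_mul]
  nlinarith [mul_neg_of_pos_of_neg hcc hsub]

noncomputable def fIntegrand (a t : ℝ) : ℝ :=
  sinh (a + t) * (sinh (2 * a + 2 * t) / √(sinh (2 * a + 2 * t) ^ 2 - sinh (2 * a) ^ 2) - 1)

noncomputable def kcIntegrand (b t : ℝ) : ℝ :=
  sinh (b + t) * (cosh (b + t) ^ 2 / √((cosh (b + t) ^ 2) ^ 2 - (cosh b ^ 2) ^ 2) - 1)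

noncomputable def kcMajorant (b t : ℝ) : ℝ :=
  sinh (b + t) * (cosh (b + t) / √(cosh (b + t) ^ 2 - cosh b ^ 2) - 1)

section Pointwise

variable {b t : ℝ}

theorem fIntegrand_nonneg (hb : 0 ≤ b) (ht : 0 < t) : 0 ≤ fIntegrand b t := by
  have hs : sinh (2 * b) < sinh (2 * b + 2 * t) := sinh_lt_sinh.2 (by linarith)
  exact mul_nonneg (sinh_nonneg_iff.2 (by linarith)) (sub_nonneg.2
    (one_le_div_sqrt_sq_sub_sq (sinh_nonneg_iff.2 (by linarith)) hs))

theorem kcIntegrand_nonneg (hb : 0 ≤ b) (ht : 0 < t) : 0 ≤ kcIntegrand b t :=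
  mul_nonneg (sinh_nonneg_iff.2 (by linarith)) (sub_nonneg.2 (one_le_div_sqrt_sq_sub_sq
    (by positivity) (pow_lt_pow_left₀ (cosh_lt_cosh_add hb ht) (cosh_pos b).le two_ne_zero)))

theorem fIntegrand_lt_kcIntegrand (hb : 0 ≤ b) (ht : 0 < t) : fIntegrand b t < kcIntegrand b t := by
  have hs : 0 < sinh (2 * b + 2 * t) := sinh_pos_iff.2 (by linarith)
  have hc : cosh b ^ 2 < cosh (b + t) ^ 2 :=
    pow_lt_pow_left₀ (cosh_lt_cosh_add hb ht) (cosh_pos b).le two_ne_zero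
  have hratio := sinh_two_mul_div_lt hb (lt_add_of_pos_right b ht)
  rw [mul_add] at hratio
  exact mul_lt_mul_of_pos_left (sub_lt_sub_right (div_sqrt_sq_sub_sq_lt hs
    (sinh_nonneg_iff.2 (by linarith)) (by positivity) hc hratio) 1)
    (sinh_pos_iff.2 (by linarith))

theorem kcIntegrand_lt_kcMajorant (hb : 0 ≤ b) (ht : 0 < t) : kcIntegrand b t < kcMajorant b t := by
  have hc := cosh_lt_cosh_add hb ht
  have hc2 : cosh b ^ 2 < cosh (b + t) ^ 2 := pow_lt_pow_left₀ hc (cosh_pos b).le two_ne_zero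
  have hratio : cosh b ^ 2 / cosh (b + t) ^ 2 < cosh b / cosh (b + t) := by
    rw [← div_pow]
    exact pow_lt_self_of_lt_one₀ (div_pos (cosh_pos b) (cosh_pos _))
      ((div_lt_one (cosh_pos _)).2 hc) one_lt_two
  exact mul_lt_mul_of_pos_left (sub_lt_sub_right (div_sqrt_sq_sub_sq_lt (by positivity)
    (by positivity) (cosh_pos _) hc hratio) 1) (sinh_pos_iff.2 (by linarith))

theorem kcMajorant_nonneg (hb : 0 ≤ b) (ht : 0 < t) : 0 ≤ kcMajorant b t :=
  mul_nonneg (sinh_nonneg_iff.2 (by linarith))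
    (sub_nonneg.2 (one_le_div_sqrt_sq_sub_sq (cosh_pos b).le (cosh_lt_cosh_add hb ht)))

theorem hasDerivAt_sqrt_cosh_sq_sub_sub_cosh (hb : 0 ≤ b) (ht : 0 < t) :
    HasDerivAt (fun s => √(cosh (b + s) ^ 2 - cosh b ^ 2) - cosh (b + s)) (kcMajorant b t) t := by
  have hpos : 0 < cosh (b + t) ^ 2 - cosh b ^ 2 :=
    sub_pos.2 (pow_lt_pow_left₀ (cosh_lt_cosh_add hb ht) (cosh_pos b).le two_ne_zero)
  have hcosh : HasDerivAt (fun s => cosh (b + s)) (sinh (b + t)) t := by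
    simpa using ((hasDerivAt_id t).const_add b).cosh
  have hsq : HasDerivAt (fun s => cosh (b + s) ^ 2 - cosh b ^ 2)
      (2 * cosh (b + t) * sinh (b + t)) t := by
    simpa using (hcosh.fun_pow 2).sub_const (cosh b ^ 2)
  refine ((hsq.sqrt hpos.ne').sub hcosh).congr_deriv ?_
  rw [kcMajorant]
  field_simp

end Pointwise

theorem tendsto_sqrt_sq_sub_sub_self (c : ℝ) :
    Tendsto (fun u => √(u ^ 2 - c) - u) atTop (𝓝 0) := by
  have hden : Tendsto (fun u => √(u ^ 2 - c) + u) atTop atTop :=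
    tendsto_atTop_mono (fun u => le_add_of_nonneg_left (sqrt_nonneg _)) tendsto_id
  have hlim := (hden.const_div_atTop c).neg
  rw [neg_zero] at hlim
  refine hlim.congr' ?_
  filter_upwards [eventually_ge_atTop (√|c|), eventually_gt_atTop 0] with u hcu hu
  have hc : c ≤ u ^ 2 := by nlinarith [le_abs_self c, sq_sqrt (abs_nonneg c), sqrt_nonneg |c|]
  have hsq := sq_sqrt (sub_nonneg.2 hc)
  have hsum : 0 < √(u ^ 2 - c) + u := by positivity
  field_simp
  nlinarith

theorem tendsto_cosh_atTop : Tendsto cosh atTop atTop :=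
  tendsto_atTop_mono (fun x => by rw [cosh_eq]; linarith [exp_pos (-x)])
    (tendsto_exp_atTop.atTop_div_const two_pos)

theorem tendsto_sqrt_cosh_sq_sub_sub_cosh (b : ℝ) :
    Tendsto (fun s => √(cosh (b + s) ^ 2 - cosh b ^ 2) - cosh (b + s)) atTop (𝓝 0) :=
  (tendsto_sqrt_sq_sub_sub_self (cosh b ^ 2)).comp
    (tendsto_cosh_atTop.comp (tendsto_atTop_add_const_left _ b tendsto_id))

section Substitution

variable {b : ℝ}

theorem integrableOn_kcMajorant (hb : 0 ≤ b) : IntegrableOn (kcMajorant b) (Ioi 0) :=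
  integrableOn_Ioi_deriv_of_nonneg (by fun_prop : Continuous _).continuousWithinAt
    (fun _ ht => hasDerivAt_sqrt_cosh_sq_sub_sub_cosh hb ht) (fun _ ht => kcMajorant_nonneg hb ht)
    (tendsto_sqrt_cosh_sq_sub_sub_cosh b)

theorem integral_kcMajorant (hb : 0 ≤ b) : ∫ t in Ioi 0, kcMajorant b t = cosh b := by
  rw [integral_Ioi_of_hasDerivAt_of_nonneg (by fun_prop : Continuous _).continuousWithinAt
    (fun _ ht => hasDerivAt_sqrt_cosh_sq_sub_sub_cosh hb ht) (fun _ ht => kcMajorant_nonneg hb ht)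
    (tendsto_sqrt_cosh_sq_sub_sub_cosh b)]
  simp

theorem strictAntiOn_cosh_div_cosh_add (hb : 0 ≤ b) :
    StrictAntiOn (fun t => cosh b / cosh (b + t)) (Ici 0) := fun t₁ ht₁ t₂ ht₂ h =>
  div_lt_div_of_pos_left (cosh_pos b) (cosh_pos _)
    (cosh_strictMonoOn (mem_Ici.2 (by linarith [mem_Ici.1 ht₁]))
      (mem_Ici.2 (by linarith [mem_Ici.1 ht₂])) (by linarith))

theorem image_cosh_div_cosh_add_Ioi (hb : 0 ≤ b) :
    (fun t => cosh b / cosh (b + t)) '' Ioi 0 = Ioo 0 1 := by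
  ext x
  constructor
  · rintro ⟨t, ht, rfl⟩
    exact ⟨by positivity, (div_lt_one (cosh_pos _)).2 (cosh_lt_cosh_add hb ht)⟩
  · rintro ⟨hx0, hx1⟩
    have hc : cosh b < cosh b / x := (lt_div_iff₀ hx0).2 (by nlinarith [cosh_pos b])
    have h1 : 1 ≤ cosh b / x := (one_le_cosh b).trans hc.le
    refine ⟨Real.arcosh (cosh b / x) - b, mem_Ioi.2 (sub_pos.2 ?_), ?_⟩
    · rwa [← cosh_strictMonoOn.lt_iff_lt (mem_Ici.2 hb) (mem_Ici.2 (Real.arcosh_nonneg h1)),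
        Real.cosh_arcosh h1]
    · simp only [add_sub_cancel, Real.cosh_arcosh h1]
      field_simp

theorem cosh_mul_Kc (hb : 0 ≤ b) : cosh b * Kc = ∫ t in Ioi 0, kcIntegrand b t := by
  have hderiv : ∀ t ∈ Ioi (0 : ℝ), HasDerivWithinAt (fun t => cosh b / cosh (b + t))
      (-(cosh b * sinh (b + t) / cosh (b + t) ^ 2)) (Ioi 0) t := fun t _ => by
    have := (((hasDerivAt_id t).const_add b).cosh.inv (cosh_pos _).ne').const_mul (cosh b)
    simpa [div_eq_mul_inv, neg_div, mul_assoc] using this.hasDerivWithinAt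
  have hinj := (strictAntiOn_cosh_div_cosh_add hb).injOn.mono Ioi_subset_Ici_self
  have hcov := integral_image_eq_integral_abs_deriv_smul measurableSet_Ioi hderiv hinj
    fun x => 1 / x ^ 2 * (1 / √(1 - x ^ 4) - 1)
  have hpoint : ∀ t ∈ Ioi (0 : ℝ), |-(cosh b * sinh (b + t) / cosh (b + t) ^ 2)| •
      (1 / (cosh b / cosh (b + t)) ^ 2 * (1 / √(1 - (cosh b / cosh (b + t)) ^ 4) - 1)) =
      (cosh b)⁻¹ * kcIntegrand b t := fun t ht => by
    have hs : 0 < sinh (b + t) := sinh_pos_iff.2 (by linarith [mem_Ioi.1 ht])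
    rw [abs_neg, abs_of_pos (by positivity), smul_eq_mul,
      show (cosh b / cosh (b + t)) ^ 4 = (cosh b ^ 2 / cosh (b + t) ^ 2) ^ 2 by ring,
      ← div_sqrt_sq_sub_sq_eq (by positivity), kcIntegrand]
    field_simp
  rw [Kc, ← image_cosh_div_cosh_add_Ioi hb, hcov, setIntegral_congr_fun measurableSet_Ioi hpoint,
    integral_const_mul, mul_inv_cancel_left₀ (cosh_pos b).ne']

end Substitution

theorem integrableOn_kcIntegrand {b : ℝ} (hb : 0 ≤ b) : IntegrableOn (kcIntegrand b) (Ioi 0) :=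
  integrableOn_of_nonneg_of_le measurableSet_Ioi
    (by unfold kcIntegrand; fun_prop : Measurable (kcIntegrand b)).aestronglyMeasurable
    (integrableOn_kcMajorant hb) (fun _ ht => kcIntegrand_nonneg hb ht)
    (fun _ ht => (kcIntegrand_lt_kcMajorant hb ht).le)

theorem integrableOn_fIntegrand {a : ℝ} (ha : 0 ≤ a) : IntegrableOn (fIntegrand a) (Ioi 0) :=
  integrableOn_of_nonneg_of_le measurableSet_Ioi
    (by unfold fIntegrand; fun_prop : Measurable (fIntegrand a)).aestronglyMeasurable
    (integrableOn_kcIntegrand ha) (fun _ ht => fIntegrand_nonneg ha ht)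
    (fun _ ht => (fIntegrand_lt_kcIntegrand ha ht).le)

theorem Kc_nonneg : 0 ≤ Kc := by
  have h := cosh_mul_Kc le_rfl
  rw [cosh_zero, one_mul] at h
  exact h ▸ setIntegral_nonneg measurableSet_Ioi fun _ ht => kcIntegrand_nonneg le_rfl ht

theorem Kc_lt_one : Kc < 1 := by
  have h := cosh_mul_Kc le_rfl
  rw [cosh_zero, one_mul] at h
  calc Kc = ∫ t in Ioi 0, kcIntegrand 0 t := h
    _ < ∫ t in Ioi 0, kcMajorant 0 t :=
      setIntegral_lt_setIntegral_of_forall_lt measurableSet_Ioi (by simp)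
        (integrableOn_kcIntegrand le_rfl) (integrableOn_kcMajorant le_rfl)
        fun _ ht => kcIntegrand_lt_kcMajorant le_rfl ht
    _ = 1 := by rw [integral_kcMajorant le_rfl, cosh_zero]

theorem f_lt_cosh_sub_one (a : ℝ) (ha : _root_.arcosh (1/(1 - Kc)) ≤ a) :
    (∫ t in Set.Ioi (0:ℝ),
      Real.sinh (a+t) *
        (Real.sinh (2*a+2*t) / Real.sqrt (Real.sinh (2*a+2*t)^2 - Real.sinh (2*a)^2) - 1))
      < Real.cosh a - 1 := by
  rw [show _root_.arcosh = Real.arcosh from rfl] at ha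
  have hK : 0 < 1 - Kc := sub_pos.2 Kc_lt_one
  have hx : 1 ≤ 1 / (1 - Kc) := by rw [le_div_iff₀ hK]; linarith [Kc_nonneg]
  have ha0 : 0 ≤ a := (Real.arcosh_nonneg hx).trans ha
  have hcosh : 1 / (1 - Kc) ≤ cosh a := by
    rw [← Real.cosh_arcosh hx]
    exact cosh_strictMonoOn.monotoneOn (mem_Ici.2 (Real.arcosh_nonneg hx)) (mem_Ici.2 ha0) ha
  calc ∫ t in Ioi 0, fIntegrand a t < ∫ t in Ioi 0, kcIntegrand a t :=
        setIntegral_lt_setIntegral_of_forall_lt measurableSet_Ioi (by simp)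
          (integrableOn_fIntegrand ha0) (integrableOn_kcIntegrand ha0) fun _ ht => fIntegrand_lt_kcIntegrand ha0 ht
    _ = cosh a * Kc := (cosh_mul_Kc ha0).symm
    _ ≤ cosh a - 1 := by rw [div_le_iff₀ hK] at hcosh; linarith
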